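/- arXiv:1904.02266 — 7 statements merged into one kernel-verified Lean document; each statement's English description precedes it below -/
import Mathlib

section
/- Let ω̂ be a real n×n skew-symmetric matrix, v ∈ ℝⁿ, and ξ = [[ω̂,v],[0,0]] ∈ se(n). For t ∈ ℝ and z ∈ ℝⁿ, let A(t)z ∈ ℝⁿ denote the first n coordinates of exp(−tξ)·(z,1). Define G(t) = Σ_{i∈ι, j∈κ} c(i,j) · σ²·exp(−‖x_i − A(t)z_j‖²/(2ℓ²)). Then G is differentiable at t = 0 with derivative G′(0) = Σ_{i∈ι, j∈κ} c(i,j) · (1/ℓ²) · σ²·exp(−‖x_i − z_j‖²/(2ℓ²)) · ⟨z_j − x_i, ω̂z_j + v⟩. (This is the differential dF_e(ξ) of the alignment functional at the identity.) -/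
/-!
At `t = 0` the curve `t ↦ A(t)z` passes through `z` with velocity `-(ω̂z + v)`, because
`exp(-tξ)` has derivative `-ξ` there and `ξ·(z,1) = (ω̂z + v, 0)`. The chain rule through the
kernel, `d/dt k(x, γ t) = ℓ⁻² k(x, γ t) ⟪x - γ t, γ'⟫`, applied summand by summand, gives `G'(0)`.
-/

open Matrix

/-- The canonical identification of a plain vector `Fin n → ℝ` with a point of
Euclidean space `ℝⁿ`. -/
def toEuc {n : ℕ} (f : Fin n → ℝ) : EuclideanSpace ℝ (Fin n) := WithLp.toLp 2 f

open scoped RealInnerProductSpace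

theorem hasDerivAt_exp_neg_smul {𝔸 : Type*} [NormedRing 𝔸] [NormedAlgebra ℝ 𝔸] [CompleteSpace 𝔸]
    (M : 𝔸) (t : ℝ) :
    HasDerivAt (fun u : ℝ => NormedSpace.exp ((-u) • M)) (-(NormedSpace.exp ((-t) • M) * M)) t := by
  simpa [Function.comp_def] using (hasDerivAt_exp_smul_const M (-t)).scomp t (hasDerivAt_neg t)

theorem Matrix.hasDerivAt_exp_neg_smul_mulVec {m : Type*} [Fintype m] [DecidableEq m]
    (M : Matrix m m ℝ) (w : m → ℝ) (t : ℝ) :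
    HasDerivAt (fun u : ℝ => NormedSpace.exp ((-u) • M) *ᵥ w)
      (-(NormedSpace.exp ((-t) • M) * M) *ᵥ w) t := by
  -- any Banach-algebra norm will do; this one induces the product topology of `Matrix m m ℝ`
  let := Matrix.linftyOpNormedRing (n := m) (α := ℝ)
  let := Matrix.linftyOpNormedAlgebra (n := m) (R := ℝ) (α := ℝ)
  exact ((mulVecBilin ℝ ℝ).flip w).toContinuousLinearMap.hasFDerivAt.comp_hasDerivAt t
    (hasDerivAt_exp_neg_smul M t)

theorem Matrix.fromBlocks_replicateCol_mulVec_sumElim_one {m α : Type*} [Fintype m]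
    [NonAssocSemiring α] (A : Matrix m m α) (v z : m → α) :
    fromBlocks A (replicateCol (Fin 1) v) 0 0 *ᵥ Sum.elim z 1 =
      Sum.elim (A *ᵥ z + v) (0 : Fin 1 → α) := by
  ext (i | i) <;> simp [mulVec, dotProduct]

theorem HasDerivAt.sq_exp_kernel {E : Type*} [NormedAddCommGroup E] [InnerProductSpace ℝ E]
    {γ : ℝ → E} {γ' : E} {t : ℝ} (hγ : HasDerivAt γ γ' t) (x : E) (σ ℓ : ℝ) :
    HasDerivAt (fun s => σ ^ 2 * Real.exp (-‖x - γ s‖ ^ 2 / (2 * ℓ ^ 2)))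
      ((1 / ℓ ^ 2) * (σ ^ 2 * Real.exp (-‖x - γ t‖ ^ 2 / (2 * ℓ ^ 2))) * ⟪x - γ t, γ'⟫) t := by
  have hdiff : HasDerivAt (fun s => x - γ s) (-γ') t := by
    simpa using (hasDerivAt_const t x).fun_sub hγ
  refine ((hdiff.norm_sq.fun_neg.div_const (2 * ℓ ^ 2)).exp.const_mul (σ ^ 2)).congr_deriv ?_
  rw [inner_neg_right]
  ring

section HomogeneousCoordinates

variable {n : ℕ}

def seMatrix (ω : Matrix (Fin n) (Fin n) ℝ) (v : EuclideanSpace ℝ (Fin n)) :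
    Matrix (Fin n ⊕ Fin 1) (Fin n ⊕ Fin 1) ℝ :=
  fromBlocks ω (replicateCol (Fin 1) v) 0 0

def homogeneousAction (g : Matrix (Fin n ⊕ Fin 1) (Fin n ⊕ Fin 1) ℝ)
    (z : EuclideanSpace ℝ (Fin n)) : EuclideanSpace ℝ (Fin n) :=
  toEuc fun idx => (g *ᵥ Sum.elim z 1) (Sum.inl idx)

theorem homogeneousAction_one (z : EuclideanSpace ℝ (Fin n)) : homogeneousAction 1 z = z := by
  simp [homogeneousAction, toEuc]

theorem hasDerivAt_toEuc_comp_inl {k : Type*} {f : ℝ → Fin n ⊕ k → ℝ}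
    {f' : Fin n ⊕ k → ℝ} {t : ℝ} (hf : HasDerivAt f f' t) :
    HasDerivAt (fun s => toEuc fun i => f s (Sum.inl i)) (toEuc fun i => f' (Sum.inl i)) t :=
  (PiLp.continuousLinearEquiv 2 ℝ fun _ : Fin n => ℝ).symm.hasFDerivAt.comp_hasDerivAt t
    (hasDerivAt_pi.2 fun i => hasDerivAt_pi.1 hf (Sum.inl i))

theorem hasDerivAt_homogeneousAction_exp_neg_smul_seMatrix (ω : Matrix (Fin n) (Fin n) ℝ)
    (v z : EuclideanSpace ℝ (Fin n)) :
    HasDerivAt (fun t : ℝ => homogeneousAction (NormedSpace.exp ((-t) • seMatrix ω v)) z)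
      (-(toEuc (ω *ᵥ z) + v)) 0 := by
  have h := hasDerivAt_toEuc_comp_inl
    (Matrix.hasDerivAt_exp_neg_smul_mulVec (seMatrix ω v) (Sum.elim z 1) 0)
  simp only [neg_zero, zero_smul, NormedSpace.exp_zero, one_mul, neg_mulVec, seMatrix,
    fromBlocks_replicateCol_mulVec_sumElim_one] at h
  exact h

end HomogeneousCoordinates

theorem alignment_functional_differential_at_identity_general
    (n : ℕ) (ι κ : Type) [Fintype ι] [Fintype κ]
    (I : Type) [NormedAddCommGroup I] [InnerProductSpace ℝ I]
    (x : ι → EuclideanSpace ℝ (Fin n)) (z : κ → EuclideanSpace ℝ (Fin n))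
    (ℓX : ι → I) (ℓZ : κ → I)
    (σ ℓ : ℝ)
    (ω : Matrix (Fin n) (Fin n) ℝ) (v : EuclideanSpace ℝ (Fin n)) :
    HasDerivAt
      (fun t : ℝ => ∑ i : ι, ∑ j : κ,
        (inner ℝ (ℓX i) (ℓZ j) : ℝ) *
          (σ ^ 2 * Real.exp (-‖x i -
            toEuc (fun idx : Fin n =>
              ((NormedSpace.exp
                  ((-t) • (Matrix.fromBlocks ω (Matrix.replicateCol (Fin 1) v) 0 0 :
                    Matrix (Fin n ⊕ Fin 1) (Fin n ⊕ Fin 1) ℝ))).mulVec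
                (Sum.elim (z j) 1)) (Sum.inl idx : Fin n ⊕ Fin 1))‖ ^ 2 / (2 * ℓ ^ 2))))
      (∑ i : ι, ∑ j : κ,
        (inner ℝ (ℓX i) (ℓZ j) : ℝ) * ((1 / ℓ ^ 2) *
          (σ ^ 2 * Real.exp (-‖x i - z j‖ ^ 2 / (2 * ℓ ^ 2))) *
          (inner ℝ (z j - x i) (toEuc (ω.mulVec (z j)) + v) : ℝ)))
      0 := by
  refine HasDerivAt.fun_sum fun i _ => HasDerivAt.fun_sum fun j _ => HasDerivAt.const_mul _ ?_
  have h := (hasDerivAt_homogeneousAction_exp_neg_smul_seMatrix ω v (z j)).sq_exp_kernel (x i) σ ℓ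
  simp only [neg_zero, zero_smul, NormedSpace.exp_zero, homogeneousAction_one] at h
  rwa [← inner_neg_neg, neg_sub, neg_neg] at h

/-- With `ξ = [[ω̂,v],[0,0]] ∈ se(n)` and `A(t)z` the first `n` coordinates of
`exp(−tξ)·(z,1)`, the alignment functional
`G(t) = Σ_{i,j} c(i,j) · σ²·exp(−‖xᵢ − A(t)zⱼ‖²/(2ℓ²))` is differentiable at `t = 0` with
`G′(0) = Σ_{i,j} c(i,j) · (1/ℓ²) · σ²·exp(−‖xᵢ − zⱼ‖²/(2ℓ²)) · ⟨zⱼ − xᵢ, ω̂zⱼ + v⟩`. -/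
theorem alignment_functional_differential_at_identity
    (n : ℕ) (ι κ : Type) [Fintype ι] [Fintype κ]
    (I : Type) [NormedAddCommGroup I] [InnerProductSpace ℝ I]
    (x : ι → EuclideanSpace ℝ (Fin n)) (z : κ → EuclideanSpace ℝ (Fin n))
    (ℓX : ι → I) (ℓZ : κ → I)
    (σ ℓ : ℝ) (hσ : 0 < σ) (hℓ : 0 < ℓ)
    (ω : Matrix (Fin n) (Fin n) ℝ) (hω : ωᵀ = -ω) (v : EuclideanSpace ℝ (Fin n)) :
    HasDerivAt
      (fun t : ℝ => ∑ i : ι, ∑ j : κ,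
        (inner ℝ (ℓX i) (ℓZ j) : ℝ) *
          (σ ^ 2 * Real.exp (-‖x i -
            toEuc (fun idx : Fin n =>
              ((NormedSpace.exp
                  ((-t) • (Matrix.fromBlocks ω (Matrix.replicateCol (Fin 1) v) 0 0 :
                    Matrix (Fin n ⊕ Fin 1) (Fin n ⊕ Fin 1) ℝ))).mulVec
                (Sum.elim (z j) 1)) (Sum.inl idx : Fin n ⊕ Fin 1))‖ ^ 2 / (2 * ℓ ^ 2))))
      (∑ i : ι, ∑ j : κ,
        (inner ℝ (ℓX i) (ℓZ j) : ℝ) * ((1 / ℓ ^ 2) *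
          (σ ^ 2 * Real.exp (-‖x i - z j‖ ^ 2 / (2 * ℓ ^ 2))) *
          (inner ℝ (z j - x i) (toEuc (ω.mulVec (z j)) + v) : ℝ)))
      0 :=
  alignment_functional_differential_at_identity_general n ι κ I x z ℓX ℓZ σ ℓ ω v
end

section
/- Let R be a real n×n matrix with RᵀR = I, T ∈ ℝⁿ, and set z̃_j = Rᵀz_j − RᵀT for each j. Let ω̂ be a real n×n skew-symmetric matrix, v ∈ ℝⁿ, ξ = [[ω̂,v],[0,0]] ∈ se(n), and let h = [[R,T],[0,1]]. Define G(t) = Σ_{i∈ι, j∈κ} c(i,j) · σ²·exp(−‖x_i − B(t)z_j‖²/(2ℓ²)), where B(t)z_j ∈ ℝⁿ denotes the first n coordinates of (h·exp(tξ))⁻¹·(z_j,1). Then G is differentiable at t = 0 with derivative G′(0) = Σ_{i∈ι, j∈κ} c(i,j) · (1/ℓ²) · σ²·exp(−‖x_i − z̃_j‖²/(2ℓ²)) · ⟨z̃_j − x_i, ω̂z̃_j + v⟩. (This is the left-translated differential dF_h((ℓ_h)_*ξ) of the alignment functional at h ∈ SE(n).) -/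
/-!
Since `(h·exp(tξ))⁻¹ = exp(−tξ)·h⁻¹` and `h⁻¹` sends `(zⱼ, 1)` to `(z̃ⱼ, 1)`, the moving point is
`exp(−tξ)·(z̃ⱼ, 1)`, whose velocity at `t = 0` is `−ξ·(z̃ⱼ, 1) = −(ω̂z̃ⱼ + v, 0)`. Each summand is
then differentiated by the chain rule for the Gaussian kernel along a curve `γ`:
`(k(x, γ t))' = ℓ⁻²·k(x, γ t)·⟪x − γ t, γ'⟫`.
-/

open Matrix

open scoped RealInnerProductSpace

namespace Matrix

variable {α : Type*} {l m o : Type*}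

theorem fromBlocks_replicateCol_mulVec_sumElim_one_s3 [Semiring α] [Fintype l] (A : Matrix m l α) (b : m → α)
    (C : Matrix o l α) (D : Matrix o (Fin 1) α) (u : l → α) :
    fromBlocks A (replicateCol (Fin 1) b) C D *ᵥ Sum.elim u 1
      = Sum.elim (A *ᵥ u + b) (C *ᵥ u + D *ᵥ 1) := by
  rw [fromBlocks_mulVec]
  congr 2
  ext i
  simp [mulVec, dotProduct]

variable [Fintype m] [DecidableEq m]

theorem inv_fromBlocks_replicateCol_of_mul_eq_one [CommRing α] {R S : Matrix m m α} (hS : S * R = 1)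
    (T : m → α) :
    (fromBlocks R (replicateCol (Fin 1) T) 0 1 : Matrix (m ⊕ Fin 1) (m ⊕ Fin 1) α)⁻¹
      = fromBlocks S (replicateCol (Fin 1) (-(S *ᵥ T))) 0 1 := by
  apply inv_eq_left_inv
  rw [fromBlocks_multiply, ← fromBlocks_one]
  simp [hS, ← replicateCol_mulVec, ← replicateCol_add]


theorem hasDerivAt_exp_smul_mulVec_zero (A : Matrix m m ℝ) (w : m → ℝ) :
    HasDerivAt (fun t : ℝ => NormedSpace.exp (t • A) *ᵥ w) (A *ᵥ w) 0 := by
  -- any submultiplicative norm will do: all of them induce the product topology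
  let _ : NormedRing (Matrix m m ℝ) := Matrix.linftyOpNormedRing
  let _ : NormedAlgebra ℝ (Matrix m m ℝ) := Matrix.linftyOpNormedAlgebra
  have hexp : HasDerivAt (fun t : ℝ => NormedSpace.exp (t • A)) A 0 := by
    have h := hasDerivAt_exp_smul_const A (0 : ℝ)
    simp only [zero_smul, NormedSpace.exp_zero, one_mul] at h
    exact h
  let L : Matrix m m ℝ →L[ℝ] m → ℝ :=
    LinearMap.toContinuousLinearMap ((mulVecBilin ℝ ℝ).flip w)
  exact L.hasFDerivAt.comp_hasDerivAt 0 hexp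

theorem hasDerivAt_mul_exp_smul_inv_mulVec_zero (h ξ : Matrix m m ℝ) (w : m → ℝ) :
    HasDerivAt (fun t : ℝ => (h * NormedSpace.exp (t • ξ))⁻¹ *ᵥ w) (-(ξ *ᵥ (h⁻¹ *ᵥ w))) 0 := by
  have hinv : ∀ t : ℝ, (h * NormedSpace.exp (t • ξ))⁻¹ = NormedSpace.exp (t • -ξ) * h⁻¹ := by
    intro t
    rw [mul_inv_rev, smul_neg, Matrix.exp_neg]
  simp only [hinv, ← mulVec_mulVec, ← neg_mulVec]
  exact hasDerivAt_exp_smul_mulVec_zero (-ξ) (h⁻¹ *ᵥ w)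

end Matrix

theorem HasDerivAt.toEuc_comp_inl {n : ℕ} {β : Type*} [Fintype β]
    {f : ℝ → Fin n ⊕ β → ℝ} {f' : Fin n ⊕ β → ℝ} {t : ℝ} (hf : HasDerivAt f f' t) :
    HasDerivAt (fun s => toEuc fun i => f s (Sum.inl i)) (toEuc fun i => f' (Sum.inl i)) t := by
  unfold toEuc
  exact (PiLp.hasFDerivAt_toLp (𝕜 := ℝ) 2 fun i => f t (Sum.inl i)).comp_hasDerivAt t
    (hasDerivAt_pi.2 fun i => hasDerivAt_pi.1 hf (Sum.inl i))

section Kernel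

variable {E : Type*} [NormedAddCommGroup E] [InnerProductSpace ℝ E]

noncomputable def sqExpKernel (σ ℓ : ℝ) (x y : E) : ℝ :=
  σ ^ 2 * Real.exp (-‖x - y‖ ^ 2 / (2 * ℓ ^ 2))

theorem HasDerivAt.sqExpKernel {γ : ℝ → E} {γ' : E} {t : ℝ} (hγ : HasDerivAt γ γ' t)
    (σ ℓ : ℝ) (x : E) :
    HasDerivAt (fun s => _root_.sqExpKernel σ ℓ x (γ s))
      (1 / ℓ ^ 2 * _root_.sqExpKernel σ ℓ x (γ t) * ⟪x - γ t, γ'⟫) t := by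
  refine (((hγ.const_sub x).norm_sq.fun_neg.div_const (2 * ℓ ^ 2)).exp.const_mul (σ ^ 2)).congr_deriv
    ?_
  rw [inner_neg_right, _root_.sqExpKernel]
  ring

end Kernel

theorem alignment_functional_differential_left_translated_general
    (n : ℕ) (ι κ : Type) [Fintype ι] [Fintype κ]
    (I : Type) [NormedAddCommGroup I] [InnerProductSpace ℝ I]
    (x : ι → EuclideanSpace ℝ (Fin n)) (z : κ → EuclideanSpace ℝ (Fin n))
    (ℓX : ι → I) (ℓZ : κ → I)
    (σ ℓ : ℝ)
    (R : Matrix (Fin n) (Fin n) ℝ) (hR : Rᵀ * R = 1) (T : EuclideanSpace ℝ (Fin n))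
    (ω : Matrix (Fin n) (Fin n) ℝ) (v : EuclideanSpace ℝ (Fin n)) :
    HasDerivAt
      (fun t : ℝ => ∑ i : ι, ∑ j : κ,
        (inner ℝ (ℓX i) (ℓZ j) : ℝ) *
          (σ ^ 2 * Real.exp (-‖x i -
            toEuc (fun idx : Fin n =>
              ((((Matrix.fromBlocks R (Matrix.replicateCol (Fin 1) T) 0 1 :
                    Matrix (Fin n ⊕ Fin 1) (Fin n ⊕ Fin 1) ℝ) *
                  NormedSpace.exp
                    (t • (Matrix.fromBlocks ω (Matrix.replicateCol (Fin 1) v) 0 0 :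
                      Matrix (Fin n ⊕ Fin 1) (Fin n ⊕ Fin 1) ℝ)))⁻¹).mulVec
                (Sum.elim (z j) 1)) (Sum.inl idx : Fin n ⊕ Fin 1))‖ ^ 2 / (2 * ℓ ^ 2))))
      (∑ i : ι, ∑ j : κ,
        (inner ℝ (ℓX i) (ℓZ j) : ℝ) * ((1 / ℓ ^ 2) *
          (σ ^ 2 * Real.exp
            (-‖x i - (toEuc (Rᵀ.mulVec (z j)) - toEuc (Rᵀ.mulVec T))‖ ^ 2 / (2 * ℓ ^ 2))) *
          (inner ℝ ((toEuc (Rᵀ.mulVec (z j)) - toEuc (Rᵀ.mulVec T)) - x i)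
            (toEuc (ω.mulVec (toEuc (Rᵀ.mulVec (z j)) - toEuc (Rᵀ.mulVec T))) + v) : ℝ)))
      0 := by
  refine HasDerivAt.fun_sum fun i _ => HasDerivAt.fun_sum fun j _ => HasDerivAt.const_mul _ ?_
  set zt := toEuc (Rᵀ *ᵥ z j) - toEuc (Rᵀ *ᵥ T)
  set g : Matrix (Fin n ⊕ Fin 1) (Fin n ⊕ Fin 1) ℝ := fromBlocks R (replicateCol (Fin 1) T) 0 1
  set ξ : Matrix (Fin n ⊕ Fin 1) (Fin n ⊕ Fin 1) ℝ := fromBlocks ω (replicateCol (Fin 1) v) 0 0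
  have hpoint : g⁻¹ *ᵥ Sum.elim (z j) 1 = Sum.elim zt 1 := by
    rw [inv_fromBlocks_replicateCol_of_mul_eq_one hR, fromBlocks_replicateCol_mulVec_sumElim_one_s3]
    simp [zt, toEuc, sub_eq_add_neg]
  have hvel : ξ *ᵥ Sum.elim zt 1 = Sum.elim (toEuc (ω *ᵥ zt) + v) 0 := by
    rw [fromBlocks_replicateCol_mulVec_sumElim_one_s3]
    simp [toEuc]
  have hγ := (hasDerivAt_mul_exp_smul_inv_mulVec_zero g ξ (Sum.elim (z j) 1)).toEuc_comp_inl
  rw [hpoint, hvel] at hγ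
  refine (hγ.sqExpKernel σ ℓ (x i)).congr_deriv ?_
  simp only [zero_smul, NormedSpace.exp_zero, mul_one, hpoint, Sum.elim_inl, Pi.neg_apply]
  have hzt : (toEuc fun k => zt k) = zt := rfl
  have hneg : ∀ w : EuclideanSpace ℝ (Fin n), (toEuc fun k => -w k) = -w := fun _ => rfl
  rw [hzt, hneg, inner_neg_right, ← inner_neg_left, neg_sub]
  rfl

/-- Let `h = [[R,T],[0,1]] ∈ SE(n)` (with `RᵀR = I`), `ξ = [[ω̂,v],[0,0]] ∈ se(n)`,
`z̃ⱼ = Rᵀzⱼ − RᵀT`, and let `B(t)zⱼ` be the first `n` coordinates of `(h·exp(tξ))⁻¹·(zⱼ,1)`.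
Then `G(t) = Σ_{i,j} c(i,j)·σ²·exp(−‖xᵢ − B(t)zⱼ‖²/(2ℓ²))` is differentiable at `t = 0` with
`G′(0) = Σ_{i,j} c(i,j)·(1/ℓ²)·σ²·exp(−‖xᵢ − z̃ⱼ‖²/(2ℓ²))·⟨z̃ⱼ − xᵢ, ω̂z̃ⱼ + v⟩`
(the left-translated differential of the alignment functional at `h`). -/
theorem alignment_functional_differential_left_translated
    (n : ℕ) (ι κ : Type) [Fintype ι] [Fintype κ]
    (I : Type) [NormedAddCommGroup I] [InnerProductSpace ℝ I]
    (x : ι → EuclideanSpace ℝ (Fin n)) (z : κ → EuclideanSpace ℝ (Fin n))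
    (ℓX : ι → I) (ℓZ : κ → I)
    (σ ℓ : ℝ) (hσ : 0 < σ) (hℓ : 0 < ℓ)
    (R : Matrix (Fin n) (Fin n) ℝ) (hR : Rᵀ * R = 1) (T : EuclideanSpace ℝ (Fin n))
    (ω : Matrix (Fin n) (Fin n) ℝ) (hω : ωᵀ = -ω) (v : EuclideanSpace ℝ (Fin n)) :
    HasDerivAt
      (fun t : ℝ => ∑ i : ι, ∑ j : κ,
        (inner ℝ (ℓX i) (ℓZ j) : ℝ) *
          (σ ^ 2 * Real.exp (-‖x i -
            toEuc (fun idx : Fin n =>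
              ((((Matrix.fromBlocks R (Matrix.replicateCol (Fin 1) T) 0 1 :
                    Matrix (Fin n ⊕ Fin 1) (Fin n ⊕ Fin 1) ℝ) *
                  NormedSpace.exp
                    (t • (Matrix.fromBlocks ω (Matrix.replicateCol (Fin 1) v) 0 0 :
                      Matrix (Fin n ⊕ Fin 1) (Fin n ⊕ Fin 1) ℝ)))⁻¹).mulVec
                (Sum.elim (z j) 1)) (Sum.inl idx : Fin n ⊕ Fin 1))‖ ^ 2 / (2 * ℓ ^ 2))))
      (∑ i : ι, ∑ j : κ,
        (inner ℝ (ℓX i) (ℓZ j) : ℝ) * ((1 / ℓ ^ 2) *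
          (σ ^ 2 * Real.exp
            (-‖x i - (toEuc (Rᵀ.mulVec (z j)) - toEuc (Rᵀ.mulVec T))‖ ^ 2 / (2 * ℓ ^ 2))) *
          (inner ℝ ((toEuc (Rᵀ.mulVec (z j)) - toEuc (Rᵀ.mulVec T)) - x i)
            (toEuc (ω.mulVec (toEuc (Rᵀ.mulVec (z j)) - toEuc (Rᵀ.mulVec T))) + v) : ℝ)))
      0 :=
  alignment_functional_differential_left_translated_general n ι κ I x z ℓX ℓZ σ ℓ R hR T ω v
end

section
/- Let M be a set, I a real inner product space, and k : M × M → ℝ a symmetric kernel that is labeled-positive-semidefinite. Then for any finite families (x_i, a_i)_{i∈ι} and (z_j, b_j)_{j∈κ} in M × I, the Cauchy–Schwarz inequality holds: (Σ_{i,j} ⟨a_i, b_j⟩ k(x_i, z_j))² ≤ (Σ_{i,i′} ⟨a_i, a_{i′}⟩ k(x_i, x_{i′})) · (Σ_{j,j′} ⟨b_j, b_{j′}⟩ k(z_j, z_{j′})). -/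
/-!
Applying `LabeledPSD` to the concatenated family `(Sum.elim x z, Sum.elim (t • a) b)` and using
the symmetry of `k` to identify the two cross terms gives `A t² + 2 C t + B ≥ 0` for every real
`t`, where `A`, `B` are the self-pairings of the two families and `C` their cross pairing; hence
the discriminant `4 C² - 4 A B` is nonpositive.
-/
/-- A symmetric kernel `k : M → M → ℝ` is labeled-positive-semidefinite with respect to labels
in a real inner product space `I` if for every finite family of points `pᵢ ∈ M` and labels
`aᵢ ∈ I`, one has `Σ_{i,j} ⟨aᵢ, aⱼ⟩ k(pᵢ, pⱼ) ≥ 0`. -/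
def LabeledPSD {M : Type} (I : Type) [NormedAddCommGroup I] [InnerProductSpace ℝ I]
    (k : M → M → ℝ) : Prop :=
  ∀ (ι : Type) (_ : Fintype ι) (p : ι → M) (a : ι → I),
    0 ≤ ∑ i : ι, ∑ j : ι, (inner ℝ (a i) (a j) : ℝ) * k (p i) (p j)

open Finset

namespace LabeledPSD

variable {M I : Type} [NormedAddCommGroup I] [InnerProductSpace ℝ I] (k : M → M → ℝ)
variable {ι κ ν : Type*} [Fintype ι] [Fintype κ] [Fintype ν]

def pairing (x : ι → M) (a : ι → I) (z : κ → M) (b : κ → I) : ℝ :=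
  ∑ i, ∑ j, inner ℝ (a i) (b j) * k (x i) (z j)

variable {k}

theorem pairing_comm (hsymm : ∀ x y, k x y = k y x)
    (x : ι → M) (a : ι → I) (z : κ → M) (b : κ → I) :
    pairing k z b x a = pairing k x a z b := by
  unfold pairing
  rw [sum_comm]
  simp only [real_inner_comm, hsymm]

theorem pairing_smul_left (x : ι → M) (a : ι → I) (z : κ → M) (b : κ → I) (t : ℝ) :
    pairing k x (t • a) z b = t * pairing k x a z b := by
  simp only [pairing, Pi.smul_apply, real_inner_smul_left, mul_sum, mul_assoc]

theorem pairing_smul_right (x : ι → M) (a : ι → I) (z : κ → M) (b : κ → I) (t : ℝ) :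
    pairing k x a z (t • b) = t * pairing k x a z b := by
  simp only [pairing, Pi.smul_apply, real_inner_smul_right, mul_sum, mul_assoc]

theorem pairing_sumElim_left (x : ι → M) (a : ι → I) (y : κ → M) (c : κ → I)
    (z : ν → M) (b : ν → I) :
    pairing k (Sum.elim x y) (Sum.elim a c) z b = pairing k x a z b + pairing k y c z b := by
  simp only [pairing, Fintype.sum_sum_type, Sum.elim_inl, Sum.elim_inr]

theorem pairing_sumElim_right (x : ι → M) (a : ι → I) (z : κ → M) (b : κ → I)
    (w : ν → M) (c : ν → I) :
    pairing k x a (Sum.elim z w) (Sum.elim b c) = pairing k x a z b + pairing k x a w c := by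
  simp only [pairing, Fintype.sum_sum_type, Sum.elim_inl, Sum.elim_inr, sum_add_distrib]

theorem pairing_self_nonneg (hpsd : LabeledPSD I k) {ι : Type} [Fintype ι]
    (x : ι → M) (a : ι → I) : 0 ≤ pairing k x a x a :=
  hpsd ι inferInstance x a

theorem pairing_sq_le (hsymm : ∀ x y, k x y = k y x) (hpsd : LabeledPSD I k)
    {ι κ : Type} [Fintype ι] [Fintype κ] (x : ι → M) (a : ι → I) (z : κ → M) (b : κ → I) :
    pairing k x a z b ^ 2 ≤ pairing k x a x a * pairing k z b z b := by
  have quadratic_nonneg : ∀ t : ℝ,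
      0 ≤ pairing k x a x a * (t * t) + (2 * pairing k x a z b) * t + pairing k z b z b := by
    intro t
    have h := hpsd.pairing_self_nonneg (Sum.elim x z) (Sum.elim (t • a) b)
    simp only [pairing_sumElim_left, pairing_sumElim_right, pairing_smul_left,
      pairing_smul_right, pairing_comm hsymm x a z b] at h
    linarith
  have := discrim_le_zero quadratic_nonneg
  rw [discrim] at this
  linarith

end LabeledPSD

/-- For a symmetric, labeled-positive-semidefinite kernel `k` on `M` and finite
labeled families `(xᵢ, aᵢ)` and `(zⱼ, bⱼ)`, the Cauchy–Schwarz inequality holds: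
`(Σ_{i,j} ⟨aᵢ,bⱼ⟩ k(xᵢ,zⱼ))² ≤ (Σ_{i,i′} ⟨aᵢ,aᵢ′⟩ k(xᵢ,xᵢ′)) · (Σ_{j,j′} ⟨bⱼ,bⱼ′⟩ k(zⱼ,zⱼ′))`. -/
theorem labeled_kernel_cauchy_schwarz
    {M : Type} (I : Type) [NormedAddCommGroup I] [InnerProductSpace ℝ I]
    (k : M → M → ℝ) (hsymm : ∀ x y, k x y = k y x) (hpsd : LabeledPSD I k)
    (ι κ : Type) [Fintype ι] [Fintype κ]
    (x : ι → M) (a : ι → I) (z : κ → M) (b : κ → I) :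
    (∑ i : ι, ∑ j : κ, (inner ℝ (a i) (b j) : ℝ) * k (x i) (z j)) ^ 2 ≤
      (∑ i : ι, ∑ i' : ι, (inner ℝ (a i) (a i') : ℝ) * k (x i) (x i')) *
        (∑ j : κ, ∑ j' : κ, (inner ℝ (b j) (b j') : ℝ) * k (z j) (z j')) :=
  hpsd.pairing_sq_le hsymm x a z b
end

section
/- Let G be a group acting on a set M, I a real inner product space, and k : M × M → ℝ a symmetric, labeled-positive-semidefinite kernel that is invariant under the action: k(g·x, g·y) = k(x, y) for all g ∈ G and x, y ∈ M. Given a finite family (x_i, a_i)_{i∈ι} in M × I, define F(h) = Σ_{i,j} ⟨a_i, a_j⟩ k(x_i, h⁻¹·x_j) for h ∈ G. Then the identity element is a global maximum of F: F(e) ≥ 0 and |F(h)| ≤ F(e) for all h ∈ G. (When the moving cloud equals the fixed cloud, the identity maximizes the RKHS inner product ⟨f_X, h.f_X⟩.) -/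
open Finset

variable {M I : Type} [NormedAddCommGroup I] [InnerProductSpace ℝ I]

def labeledPairing (k : M → M → ℝ) {ι κ : Type} [Fintype ι] [Fintype κ]
    (p : ι → M) (a : ι → I) (q : κ → M) (b : κ → I) : ℝ :=
  ∑ i, ∑ j, inner ℝ (a i) (b j) * k (p i) (q j)

section labeledPairing

variable {k : M → M → ℝ} {ι κ : Type} [Fintype ι] [Fintype κ]
  (p : ι → M) (a : ι → I) (q : κ → M) (b : κ → I)

theorem labeledPairing_comm (hsymm : ∀ x y, k x y = k y x) :
    labeledPairing k q b p a = labeledPairing k p a q b := by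
  unfold labeledPairing
  rw [Finset.sum_comm]
  simp only [real_inner_comm, hsymm]

theorem labeledPairing_neg_left :
    labeledPairing k p (-a) q b = -labeledPairing k p a q b := by
  simp only [labeledPairing, Pi.neg_apply, inner_neg_left, neg_mul, sum_neg_distrib]

theorem labeledPairing_neg_right :
    labeledPairing k p a q (-b) = -labeledPairing k p a q b := by
  simp only [labeledPairing, Pi.neg_apply, inner_neg_right, neg_mul, sum_neg_distrib]

theorem labeledPairing_sumElim :
    labeledPairing k (Sum.elim p q) (Sum.elim a b) (Sum.elim p q) (Sum.elim a b) =
      labeledPairing k p a p a + labeledPairing k p a q b +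
        (labeledPairing k q b p a + labeledPairing k q b q b) := by
  simp only [labeledPairing, Fintype.sum_sum_type, Sum.elim_inl, Sum.elim_inr,
    sum_add_distrib]
  ring

theorem labeledPairing_smul_smul {G : Type} [Group G] [MulAction G M]
    (hinv : ∀ (g : G) (x y : M), k (g • x) (g • y) = k x y) (g : G) :
    labeledPairing k (fun i ↦ g • p i) a (fun j ↦ g • q j) b = labeledPairing k p a q b := by
  simp only [labeledPairing, hinv]

theorem LabeledPSD.labeledPairing_self_nonneg (hpsd : LabeledPSD I k) :
    0 ≤ labeledPairing k p a p a :=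
  hpsd ι inferInstance p a

theorem LabeledPSD.two_mul_abs_labeledPairing_le (hsymm : ∀ x y, k x y = k y x)
    (hpsd : LabeledPSD I k) :
    2 * |labeledPairing k p a q b| ≤ labeledPairing k p a p a + labeledPairing k q b q b := by
  have hplus := hpsd.labeledPairing_self_nonneg (Sum.elim p q) (Sum.elim a b)
  have hminus := hpsd.labeledPairing_self_nonneg (Sum.elim p q) (Sum.elim a (-b))
  rw [labeledPairing_sumElim, labeledPairing_comm p a q b hsymm] at hplus
  rw [labeledPairing_sumElim, labeledPairing_comm p a q (-b) hsymm,
    labeledPairing_neg_left, labeledPairing_neg_right, labeledPairing_neg_right, neg_neg] at hminus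
  rcases abs_cases (labeledPairing k p a q b) with ⟨habs, _⟩ | ⟨habs, _⟩ <;> linarith

end labeledPairing

/-- Let a group `G` act on `M`, and let `k` be a symmetric,
labeled-positive-semidefinite kernel invariant under the action.  For a finite labeled family
`(xᵢ, aᵢ)` define `F(h) = Σ_{i,j} ⟨aᵢ,aⱼ⟩ k(xᵢ, h⁻¹·xⱼ)`.  Then the identity is a global
maximum of `F`: `F(e) ≥ 0` and `|F(h)| ≤ F(e)` for all `h ∈ G`. -/
theorem identity_global_maximum_of_invariant_kernel
    {M : Type} (G : Type) [Group G] [MulAction G M]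
    (I : Type) [NormedAddCommGroup I] [InnerProductSpace ℝ I]
    (k : M → M → ℝ) (hsymm : ∀ x y, k x y = k y x) (hpsd : LabeledPSD I k)
    (hinv : ∀ (g : G) (x y : M), k (g • x) (g • y) = k x y)
    (ι : Type) [Fintype ι] (x : ι → M) (a : ι → I) :
    (0 ≤ ∑ i : ι, ∑ j : ι, (inner ℝ (a i) (a j) : ℝ) * k (x i) (((1 : G)⁻¹) • x j)) ∧
      ∀ h : G,
        |∑ i : ι, ∑ j : ι, (inner ℝ (a i) (a j) : ℝ) * k (x i) (h⁻¹ • x j)| ≤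
          ∑ i : ι, ∑ j : ι, (inner ℝ (a i) (a j) : ℝ) * k (x i) (((1 : G)⁻¹) • x j) := by
  simp only [inv_one, one_smul]
  refine ⟨hpsd.labeledPairing_self_nonneg x a, fun h ↦ ?_⟩
  have hmoved : labeledPairing k (fun j ↦ h⁻¹ • x j) a (fun j ↦ h⁻¹ • x j) a =
      labeledPairing k x a x a :=
    labeledPairing_smul_smul x a x a hinv h⁻¹
  have hbound := hpsd.two_mul_abs_labeledPairing_le x a (fun j ↦ h⁻¹ • x j) a hsymm
  rw [hmoved] at hbound
  unfold labeledPairing at hbound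
  linarith
end

section
/- Let M be a metric space, g : ℝ → ℝ a function, and k(x,y) = g(d(x,y)) a stationary kernel that is symmetric and labeled-positive-semidefinite with respect to labels in a real inner product space I. Let φ : M → M be a bijective isometry (d(φ(x), φ(y)) = d(x, y) for all x, y). Given a finite family (x_i, a_i)_{i∈ι} in M × I, it holds that |Σ_{i,j} ⟨a_i, a_j⟩ k(x_i, φ⁻¹(x_j))| ≤ Σ_{i,j} ⟨a_i, a_j⟩ k(x_i, x_j), and the right-hand side is nonnegative. (For a stationary kernel and a group acting isometrically, the identity is a global maximum of F.) -/
open Finset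

theorem two_mul_abs_sum_inner_mul_le_of_labeledPSD {M I : Type} [NormedAddCommGroup I]
    [InnerProductSpace ℝ I] {k : M → M → ℝ} (hsymm : ∀ x y, k x y = k y x)
    (hpsd : LabeledPSD I k) {ι κ : Type} [Fintype ι] [Fintype κ]
    (p : ι → M) (a : ι → I) (q : κ → M) (b : κ → I) :
    2 * |∑ i, ∑ j, (inner ℝ (a i) (b j) : ℝ) * k (p i) (q j)| ≤
      (∑ i, ∑ j, (inner ℝ (a i) (a j) : ℝ) * k (p i) (p j)) +
        ∑ i, ∑ j, (inner ℝ (b i) (b j) : ℝ) * k (q i) (q j) := by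
  have hcross : ∑ j, ∑ i, (inner ℝ (b j) (a i) : ℝ) * k (q j) (p i) =
      ∑ i, ∑ j, (inner ℝ (a i) (b j) : ℝ) * k (p i) (q j) := by
    rw [sum_comm]
    exact sum_congr rfl fun i _ => sum_congr rfl fun j _ => by rw [hsymm, real_inner_comm]
  have hplus := hpsd (ι ⊕ κ) inferInstance (Sum.elim p q) (Sum.elim a b)
  have hminus := hpsd (ι ⊕ κ) inferInstance (Sum.elim p q) (Sum.elim a fun j => -b j)
  simp only [Fintype.sum_sum_type, Sum.elim_inl, Sum.elim_inr, inner_neg_left,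
    inner_neg_right, neg_mul, sum_add_distrib, sum_neg_distrib, hcross] at hplus hminus
  rw [mul_comm, ← le_div_iff₀ two_pos, abs_le]
  constructor <;> linarith

theorem stationary_kernel_apply_isometry {M : Type} [PseudoMetricSpace M] {g : ℝ → ℝ}
    {k : M → M → ℝ} (hk : ∀ x y, k x y = g (dist x y)) {f : M → M}
    (hf : ∀ x y, dist (f x) (f y) = dist x y) (x y : M) : k (f x) (f y) = k x y := by
  rw [hk, hk, hf]

/-- Let `k(x,y) = g(d(x,y))` be a stationary kernel on a metric space `M`,
symmetric and labeled-positive-semidefinite, and let `φ : M ≃ M` be a bijective isometry.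
Then for any finite labeled family `(xᵢ, aᵢ)`,
`|Σ_{i,j} ⟨aᵢ,aⱼ⟩ k(xᵢ, φ⁻¹(xⱼ))| ≤ Σ_{i,j} ⟨aᵢ,aⱼ⟩ k(xᵢ, xⱼ)`, and the right-hand side is
nonnegative (for a stationary kernel and an isometric action, the identity is a global
maximum of `F`). -/
theorem identity_global_maximum_of_stationary_kernel
    {M : Type} [MetricSpace M] (g : ℝ → ℝ)
    (I : Type) [NormedAddCommGroup I] [InnerProductSpace ℝ I]
    (k : M → M → ℝ) (hk : ∀ x y, k x y = g (dist x y))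
    (hsymm : ∀ x y, k x y = k y x) (hpsd : LabeledPSD I k)
    (φ : M ≃ M) (hφ : ∀ x y, dist (φ x) (φ y) = dist x y)
    (ι : Type) [Fintype ι] (x : ι → M) (a : ι → I) :
    |∑ i : ι, ∑ j : ι, (inner ℝ (a i) (a j) : ℝ) * k (x i) (φ.symm (x j))| ≤
        (∑ i : ι, ∑ j : ι, (inner ℝ (a i) (a j) : ℝ) * k (x i) (x j)) ∧
      0 ≤ ∑ i : ι, ∑ j : ι, (inner ℝ (a i) (a j) : ℝ) * k (x i) (x j) := by
  have hinv (u v : M) : k (φ.symm u) (φ.symm v) = k u v := by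
    simpa using (stationary_kernel_apply_isometry hk hφ (φ.symm u) (φ.symm v)).symm
  have hbound := two_mul_abs_sum_inner_mul_le_of_labeledPSD hsymm hpsd x a (φ.symm ∘ x) a
  simp only [Function.comp_apply, hinv] at hbound
  exact ⟨by linarith, hpsd ι inferInstance x a⟩
end

section
/- For any ℓ > 0, any real inner product space I, and any finite family (x_i, a_i)_{i∈ι} in ℝⁿ × I, one has Σ_{i,j} ⟨a_i, a_j⟩ exp(−‖x_i − x_j‖²/(2ℓ²)) ≥ 0. (The squared exponential kernel is labeled-positive-semidefinite with respect to labels in any real inner product space.) -/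
/-!
Write `exp (-‖x - y‖² / c) = f x * f y * exp ((2 / c) * ⟪x, y⟫)` with `f x = exp (-‖x‖² / c)`.
The outer factors are absorbed by rescaling the labels `aᵢ ↦ f xᵢ • aᵢ`, and
`exp (t * ⟪x, y⟫)` is a series with nonnegative coefficients in the powers `⟪x, y⟫ ^ m`.
Each power is labeled-positive-semidefinite by induction on `m`: multiplying a kernel by
`⟪x, y⟫` amounts to replacing the labels `aᵢ` by `aᵢ ⊗ xᵢ`, as in the Schur product theorem.
-/

open scoped TensorProduct RealInnerProductSpace Nat

def LabeledPosSemidef {X : Type} (k : X → X → ℝ) : Prop :=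
  ∀ (I : Type) [NormedAddCommGroup I] [InnerProductSpace ℝ I] (ι : Type) [Fintype ι]
    (x : ι → X) (a : ι → I), 0 ≤ ∑ i, ∑ j, ⟪a i, a j⟫ * k (x i) (x j)

namespace LabeledPosSemidef

variable {X : Type} {k : X → X → ℝ} {E : Type} [NormedAddCommGroup E] [InnerProductSpace ℝ E]

theorem one : LabeledPosSemidef fun _ _ : X ↦ 1 := by
  intro I _ _ ι _ x a
  simpa only [mul_one, ← sum_inner, ← inner_sum] using real_inner_self_nonneg

theorem const_mul (hk : LabeledPosSemidef k) {c : ℝ} (hc : 0 ≤ c) :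
    LabeledPosSemidef fun x y ↦ c * k x y := by
  intro I _ _ ι _ x a
  simpa only [Finset.mul_sum, mul_left_comm c] using mul_nonneg hc (hk I ι x a)

theorem mul_left_mul_right (hk : LabeledPosSemidef k) (f : X → ℝ) :
    LabeledPosSemidef fun x y ↦ f x * f y * k x y := by
  intro I _ _ ι _ x a
  convert hk I ι x (fun i ↦ f (x i) • a i) using 3 with i _ j _
  rw [real_inner_smul_left, real_inner_smul_right]
  ring

theorem inner_mul {k : E → E → ℝ} (hk : LabeledPosSemidef k) :
    LabeledPosSemidef fun x y ↦ ⟪x, y⟫ * k x y := by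
  intro I _ _ ι _ x a
  convert hk (I ⊗[ℝ] E) ι x (fun i ↦ a i ⊗ₜ x i) using 3 with i _ j _
  rw [TensorProduct.inner_tmul, mul_assoc]

theorem inner_pow (m : ℕ) : LabeledPosSemidef fun x y : E ↦ ⟪x, y⟫ ^ m := by
  induction m with
  | zero => simpa only [pow_zero] using one
  | succ m ih => simpa only [pow_succ'] using ih.inner_mul

theorem of_hasSum {K : ℕ → X → X → ℝ} (hK : ∀ m, LabeledPosSemidef (K m))
    (hk : ∀ x y, HasSum (fun m ↦ K m x y) (k x y)) : LabeledPosSemidef k := by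
  intro I _ _ ι _ x a
  exact (hasSum_sum fun i _ ↦ hasSum_sum fun j _ ↦ (hk (x i) (x j)).mul_left _).nonneg
    fun m ↦ hK m I ι x a

theorem exp_mul_inner {t : ℝ} (ht : 0 ≤ t) :
    LabeledPosSemidef fun x y : E ↦ Real.exp (t * ⟪x, y⟫) := by
  refine of_hasSum (fun m ↦ (inner_pow m).const_mul (by positivity : 0 ≤ t ^ m / m !))
    fun x y ↦ ?_
  have h := NormedSpace.expSeries_div_hasSum_exp (t * ⟪x, y⟫)
  rw [← Real.exp_eq_exp_ℝ] at h
  simpa only [mul_pow, div_mul_eq_mul_div] using h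

theorem gaussian {c : ℝ} (hc : 0 ≤ c) :
    LabeledPosSemidef fun x y : E ↦ Real.exp (-‖x - y‖ ^ 2 / c) := by
  convert (exp_mul_inner (by positivity : 0 ≤ 2 / c)).mul_left_mul_right
    fun x : E ↦ Real.exp (-‖x‖ ^ 2 / c) using 3 with x y
  rw [← Real.exp_add, ← Real.exp_add, norm_sub_sq_real]
  congr 1
  ring

end LabeledPosSemidef

theorem squared_exponential_kernel_labeled_posSemidef_general
    (n : ℕ) (ℓ : ℝ)
    (I : Type) [NormedAddCommGroup I] [InnerProductSpace ℝ I]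
    (ι : Type) [Fintype ι] (x : ι → EuclideanSpace ℝ (Fin n)) (a : ι → I) :
    0 ≤ ∑ i : ι, ∑ j : ι,
      (inner ℝ (a i) (a j) : ℝ) * Real.exp (-‖x i - x j‖ ^ 2 / (2 * ℓ ^ 2)) :=
  LabeledPosSemidef.gaussian (by positivity) I ι x a

/-- The squared exponential kernel is labeled-positive-semidefinite with
respect to labels in any real inner product space: for any `ℓ > 0` and any finite family
`(xᵢ, aᵢ)` in `ℝⁿ × I`, `Σ_{i,j} ⟨aᵢ, aⱼ⟩ exp(−‖xᵢ − xⱼ‖²/(2ℓ²)) ≥ 0`. -/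
theorem squared_exponential_kernel_labeled_posSemidef
    (n : ℕ) (ℓ : ℝ) (hℓ : 0 < ℓ)
    (I : Type) [NormedAddCommGroup I] [InnerProductSpace ℝ I]
    (ι : Type) [Fintype ι] (x : ι → EuclideanSpace ℝ (Fin n)) (a : ι → I) :
    0 ≤ ∑ i : ι, ∑ j : ι,
      (inner ℝ (a i) (a j) : ℝ) * Real.exp (-‖x i - x j‖ ^ 2 / (2 * ℓ ^ 2)) :=
  squared_exponential_kernel_labeled_posSemidef_general n ℓ I ι x a
end

section
/- Let M be a set, I a real inner product space, and k : M × M → ℝ a symmetric, labeled-positive-semidefinite kernel. Let (x_i, a_i)_{i∈ι} and (z_j, b_j)_{j∈κ} be finite families in M × I, and for a map φ : M → M write F(φ) = Σ_{i,j} ⟨a_i, b_j⟩ k(x_i, φ(z_j)), ‖f_X‖² = Σ_{i,i′} ⟨a_i, a_{i′}⟩ k(x_i, x_{i′}), and ‖φ.f_Z‖² = Σ_{j,j′} ⟨b_j, b_{j′}⟩ k(φ(z_j), φ(z_{j′})). Suppose φ* : M → M satisfies: (i) F(φ*) ≥ F(id) ≥ 0, (ii) ‖φ*.f_Z‖² ≤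 ‖id.f_Z‖², and (iii) ‖f_X‖ > 0, ‖φ*.f_Z‖ > 0, ‖id.f_Z‖ > 0. Then 0 ≤ F(id)/(‖f_X‖·‖id.f_Z‖) ≤ F(φ*)/(‖f_X‖·‖φ*.f_Z‖) ≤ 1. (The maximizer of the alignment functional minimizes the angle between f_X and f_Z.) -/
open Finset

section KernelPairing

variable {M I : Type} [NormedAddCommGroup I] [InnerProductSpace ℝ I] {ι κ : Type}
  [Fintype ι] [Fintype κ]

/-- The RKHS inner product of `Σ_i aᵢ k(·, pᵢ)` and `Σ_j bⱼ k(·, qⱼ)`. -/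
def kernelPairing (k : M → M → ℝ) (p : ι → M) (a : ι → I) (q : κ → M) (b : κ → I) : ℝ :=
  ∑ i, ∑ j, inner ℝ (a i) (b j) * k (p i) (q j)

theorem kernelPairing_comm {k : M → M → ℝ} (hsymm : ∀ x y, k x y = k y x)
    (p : ι → M) (a : ι → I) (q : κ → M) (b : κ → I) :
    kernelPairing k q b p a = kernelPairing k p a q b := by
  unfold kernelPairing
  rw [Finset.sum_comm]
  simp only [real_inner_comm, hsymm]

theorem kernelPairing_smul_left (k : M → M → ℝ) (p : ι → M) (a : ι → I) (q : κ → M)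
    (b : κ → I) (t : ℝ) :
    kernelPairing k p (t • a) q b = t * kernelPairing k p a q b := by
  simp only [kernelPairing, Pi.smul_apply, real_inner_smul_left, mul_sum, mul_assoc]

theorem kernelPairing_smul_right (k : M → M → ℝ) (p : ι → M) (a : ι → I) (q : κ → M)
    (b : κ → I) (t : ℝ) :
    kernelPairing k p a q (t • b) = t * kernelPairing k p a q b := by
  simp only [kernelPairing, Pi.smul_apply, real_inner_smul_right, mul_sum]
  ring_nf

theorem kernelPairing_sumElim_left {ι' : Type} [Fintype ι'] (k : M → M → ℝ) (p : ι → M)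
    (a : ι → I) (p' : ι' → M) (a' : ι' → I) (q : κ → M) (b : κ → I) :
    kernelPairing k (Sum.elim p p') (Sum.elim a a') q b =
      kernelPairing k p a q b + kernelPairing k p' a' q b :=
  Fintype.sum_sum_type _

theorem kernelPairing_sumElim_right {κ' : Type} [Fintype κ'] (k : M → M → ℝ) (p : ι → M)
    (a : ι → I) (q : κ → M) (b : κ → I) (q' : κ' → M) (b' : κ' → I) :
    kernelPairing k p a (Sum.elim q q') (Sum.elim b b') =
      kernelPairing k p a q b + kernelPairing k p a q' b' := by
  simp only [kernelPairing, Fintype.sum_sum_type, Sum.elim_inl, Sum.elim_inr, sum_add_distrib]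

theorem LabeledPSD.kernelPairing_self_nonneg {k : M → M → ℝ} (hpsd : LabeledPSD I k)
    (p : ι → M) (a : ι → I) : 0 ≤ kernelPairing k p a p a :=
  hpsd ι inferInstance p a

theorem LabeledPSD.kernelPairing_sq_le {k : M → M → ℝ} (hsymm : ∀ x y, k x y = k y x)
    (hpsd : LabeledPSD I k) (p : ι → M) (a : ι → I) (q : κ → M) (b : κ → I) :
    kernelPairing k p a q b ^ 2 ≤ kernelPairing k p a p a * kernelPairing k q b q b := by
  -- the self-pairing of `f + t g` is a nonnegative quadratic polynomial in `t`
  have hquad : ∀ t : ℝ, 0 ≤ kernelPairing k q b q b * (t * t) +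
      2 * kernelPairing k p a q b * t + kernelPairing k p a p a := by
    intro t
    have h := hpsd.kernelPairing_self_nonneg (Sum.elim p q) (Sum.elim a (t • b))
    simp only [kernelPairing_sumElim_left, kernelPairing_sumElim_right, kernelPairing_smul_left,
      kernelPairing_smul_right, kernelPairing_comm hsymm p a q b] at h
    linarith
  have := discrim_le_zero hquad
  unfold discrim at this
  linarith

end KernelPairing

/-- The maximizer of the alignment functional minimizes the angle between
`f_X` and `f_Z`: writing `F(φ) = Σ_{i,j} ⟨aᵢ,bⱼ⟩ k(xᵢ, φ(zⱼ))`,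
`‖f_X‖² = Σ_{i,i′} ⟨aᵢ,aᵢ′⟩ k(xᵢ,xᵢ′)` and `‖φ.f_Z‖² = Σ_{j,j′} ⟨bⱼ,bⱼ′⟩ k(φ(zⱼ),φ(zⱼ′))`,
if `φ*` satisfies `F(φ*) ≥ F(id) ≥ 0`, `‖φ*.f_Z‖² ≤ ‖id.f_Z‖²` and all three norms are
positive, then `0 ≤ F(id)/(‖f_X‖·‖id.f_Z‖) ≤ F(φ*)/(‖f_X‖·‖φ*.f_Z‖) ≤ 1`. -/
theorem maximizer_minimizes_angle
    {M : Type} (I : Type) [NormedAddCommGroup I] [InnerProductSpace ℝ I]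
    (k : M → M → ℝ) (hsymm : ∀ x y, k x y = k y x) (hpsd : LabeledPSD I k)
    (ι κ : Type) [Fintype ι] [Fintype κ]
    (x : ι → M) (a : ι → I) (z : κ → M) (b : κ → I)
    (φstar : M → M)
    -- abbreviations (introduced as equalities, so the statement stays faithful)
    (F : (M → M) → ℝ)
    (hF : ∀ φ : M → M, F φ = ∑ i : ι, ∑ j : κ, (inner ℝ (a i) (b j) : ℝ) * k (x i) (φ (z j)))
    (normfX : ℝ) (hnormfX : normfX ^ 2 = ∑ i : ι, ∑ i' : ι,
      (inner ℝ (a i) (a i') : ℝ) * k (x i) (x i'))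
    (normfZ : (M → M) → ℝ)
    (hnormfZ : ∀ φ : M → M, (normfZ φ) ^ 2 = ∑ j : κ, ∑ j' : κ,
      (inner ℝ (b j) (b j') : ℝ) * k (φ (z j)) (φ (z j')))
    -- hypotheses (i)–(iii)
    (h1 : F φstar ≥ F id) (h1' : F id ≥ 0)
    (h2 : (normfZ φstar) ^ 2 ≤ (normfZ id) ^ 2)
    (h3 : 0 < normfX) (h3' : 0 < normfZ φstar) (h3'' : 0 < normfZ id) :
    0 ≤ F id / (normfX * normfZ id) ∧
      F id / (normfX * normfZ id) ≤ F φstar / (normfX * normfZ φstar) ∧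
      F φstar / (normfX * normfZ φstar) ≤ 1 := by
  have hden : 0 < normfX * normfZ φstar := mul_pos h3 h3'
  have hden' : 0 < normfX * normfZ id := mul_pos h3 h3''
  have hCS : F φstar ≤ normfX * normfZ φstar := by
    have hsq : F φstar ^ 2 ≤ (normfX * normfZ φstar) ^ 2 := by
      rw [mul_pow, hnormfX, hnormfZ, hF]
      exact hpsd.kernelPairing_sq_le hsymm x a (φstar ∘ z) b
    exact (abs_le_of_sq_le_sq' hsq hden.le).2
  have hZ : normfZ φstar ≤ normfZ id := (pow_le_pow_iff_left₀ h3'.le h3''.le two_ne_zero).1 h2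
  refine ⟨div_nonneg h1' hden'.le, ?_, (div_le_one hden).2 hCS⟩
  exact div_le_div₀ (h1'.trans h1) h1 hden (mul_le_mul_of_nonneg_left hZ h3.le)
end
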